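/- For every integer k ≥ 2, the conjugation h is of class C^k on (-a,a) if and only if D is of class C^k on (-a,a). -/

import Mathlib

/-!
If `h` is `C^k`, then `D = h⁻¹ ∘ (λ • h)` is `C^k` by the inverse function theorem.

Conversely, let `D` be `C^k`. Differentiating the Schröder equation gives
`h'(D x) D'(x) = λ h'(x)`, so `ψ = log h'` solves `ψ = ψ ∘ D + log (D' / λ)`, and its `j`-th
derivative solves a twisted equation `w = D'^j · (w ∘ D) + r`. Near `0` we have `0 < D' ≤ ν < 1`,
so the Neumann series `∑ Lⁿ r` of the weighted composition operator `L u = D'^j · (u ∘ D)`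
converges in `C¹`: each application of `L` contributes a factor `ν` to the derivative. Since
`|D'^j| ≤ 1` and every orbit of `D` tends to `0`, a solution continuous at `0` is determined by
its value there, so `w` equals this `C¹` sum. Bootstrapping in `j` makes `ψ`, hence `h'`,
`C^(k-1)` near `0`. Finally `h = λ⁻ᴺ · h ∘ Dᴺ` spreads this to the whole interval, because every
orbit enters any neighbourhood of `0`.
-/

open Set Filter Topology

def weightedComp (c D u : ℝ → ℝ) : ℝ → ℝ := fun x => c x * u (D x)

section WeightedComp

variable {c D r : ℝ → ℝ} {s : Set ℝ}

@[simp]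
lemma weightedComp_apply (u : ℝ → ℝ) (x : ℝ) : weightedComp c D u x = c x * u (D x) := rfl

lemma weightedComp_iterate_succ_apply (n : ℕ) (x : ℝ) :
    (weightedComp c D)^[n + 1] r x = c x * (weightedComp c D)^[n] r (D x) := by
  rw [Function.iterate_succ_apply']
  rfl

lemma HasDerivAt.weightedComp {u : ℝ → ℝ} {x c' D' u' : ℝ} (hc : HasDerivAt c c' x)
    (hD : HasDerivAt D D' x) (hu : HasDerivAt u u' (D x)) :
    HasDerivAt (weightedComp c D u) (c' * u (D x) + c x * (u' * D')) x :=
  hc.mul (hu.comp x hD)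

lemma deriv_eq_weightedComp_add {w : ℝ → ℝ} (hs : IsOpen s)
    (hDs : MapsTo D s s) (hc : DifferentiableOn ℝ c s) (hD : DifferentiableOn ℝ D s)
    (hr : DifferentiableOn ℝ r s) (hw : DifferentiableOn ℝ w s)
    (hweq : ∀ x ∈ s, w x = weightedComp c D w x + r x) {x : ℝ} (hx : x ∈ s) :
    deriv w x = weightedComp (c * deriv D) D (deriv w) x + (deriv c x * w (D x) + deriv r x) := by
  have hasDeriv {f : ℝ → ℝ} (hf : DifferentiableOn ℝ f s) {y : ℝ} (hy : y ∈ s) :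
      HasDerivAt f (deriv f y) y :=
    (hf.differentiableAt (hs.mem_nhds hy)).hasDerivAt
  have h := ((hasDeriv hc hx).weightedComp (hasDeriv hD hx) (hasDeriv hw (hDs hx))).add
    (hasDeriv hr hx)
  rw [(h.congr_of_eventuallyEq (eventually_of_mem (hs.mem_nhds hx) hweq)).deriv]
  simp only [weightedComp_apply, Pi.mul_apply]
  ring

lemma ContDiffOn.weightedComp_iterate {m : WithTop ℕ∞} (hc : ContDiffOn ℝ m c s)
    (hD : ContDiffOn ℝ m D s) (hDs : MapsTo D s s) (hr : ContDiffOn ℝ m r s) (n : ℕ) :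
    ContDiffOn ℝ m ((weightedComp c D)^[n] r) s := by
  induction n with
  | zero => exact hr
  | succ n ih =>
    rw [Function.iterate_succ']
    exact hc.mul (ih.comp hD hDs)

lemma abs_weightedComp_iterate_le {θ : ℝ} (hθ : 0 ≤ θ) (hc : ∀ x ∈ s, |c x| ≤ θ)
    (hDs : MapsTo D s s) (n : ℕ) :
    ∀ x ∈ s, |(weightedComp c D)^[n] r x| ≤ θ ^ n * |r (D^[n] x)| := by
  induction n with
  | zero => simp
  | succ n ih =>
    intro x hx
    rw [weightedComp_iterate_succ_apply, abs_mul, pow_succ', Function.iterate_succ_apply,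
      mul_assoc]
    exact mul_le_mul (hc x hx) (ih _ (hDs hx)) (abs_nonneg _) hθ

lemma abs_deriv_weightedComp_iterate_le (hs : IsOpen s) (hDs : MapsTo D s s)
    (hc : ContDiffOn ℝ 1 c s) (hD : ContDiffOn ℝ 1 D s) (hr : ContDiffOn ℝ 1 r s)
    {ν θ K R B : ℝ} (hνθ : ν < θ) (hc1 : ∀ x ∈ s, |c x| ≤ 1)
    (hc' : ∀ x ∈ s, |deriv c x| ≤ K) (hD' : ∀ x ∈ s, |deriv D x| ≤ ν)
    (hr' : ∀ x ∈ s, |deriv r x| ≤ R)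
    (hdecay : ∀ n, ∀ x ∈ s, |(weightedComp c D)^[n] r x| ≤ B * θ ^ n) :
    ∃ A, ∀ n, ∀ x ∈ s, |deriv ((weightedComp c D)^[n] r) x| ≤ A * θ ^ n := by
  have hasDeriv {f : ℝ → ℝ} (hf : ContDiffOn ℝ 1 f s) {x : ℝ} (hx : x ∈ s) :
      HasDerivAt f (deriv f x) x :=
    ((hf.differentiableOn one_ne_zero).differentiableAt (hs.mem_nhds hx)).hasDerivAt
  -- `A (θ - ν) ≥ K B` makes the bound survive `(L u)' = c' · u ∘ D + c · D' · u' ∘ D`.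
  refine ⟨max R (K * B / (θ - ν)), fun n => ?_⟩
  induction n with
  | zero => simpa using fun x hx => (hr' x hx).trans (le_max_left _ _)
  | succ n ih =>
    intro x hx
    set u := (weightedComp c D)^[n] r
    have hu : ContDiffOn ℝ 1 u s := hc.weightedComp_iterate hD hDs hr n
    have hderiv := (hasDeriv hc hx).weightedComp (hasDeriv hD hx) (hasDeriv hu (hDs hx))
    rw [Function.iterate_succ_apply', hderiv.deriv]
    set A := max R (K * B / (θ - ν))
    have hK : 0 ≤ K := (abs_nonneg _).trans (hc' x hx)
    have hν : 0 ≤ ν := (abs_nonneg _).trans (hD' x hx)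
    have hθ : 0 ≤ θ ^ n := pow_nonneg (hν.trans hνθ.le) n
    have hA : K * B ≤ A * (θ - ν) := (div_le_iff₀ (by linarith)).1 (le_max_right _ _)
    have h1 : |deriv c x * u (D x)| ≤ K * (B * θ ^ n) := by
      rw [abs_mul]
      exact mul_le_mul (hc' x hx) (hdecay n _ (hDs hx)) (abs_nonneg _) hK
    have h2 : |c x * (deriv u (D x) * deriv D x)| ≤ A * θ ^ n * ν := by
      rw [abs_mul, abs_mul]
      have hu' := ih _ (hDs hx)
      calc |c x| * (|deriv u (D x)| * |deriv D x|) ≤ 1 * (A * θ ^ n * ν) :=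
            mul_le_mul (hc1 x hx) (mul_le_mul hu' (hD' x hx) (abs_nonneg _)
              ((abs_nonneg _).trans hu')) (by positivity) zero_le_one
        _ = A * θ ^ n * ν := one_mul _
    calc _ ≤ K * (B * θ ^ n) + A * θ ^ n * ν := (abs_add_le _ _).trans (add_le_add h1 h2)
      _ ≤ A * θ ^ (n + 1) := by rw [pow_succ]; nlinarith

lemma contDiffOn_tsum_weightedComp_iterate (hs : IsOpen s) (hs' : IsPreconnected s)
    (hs0 : s.Nonempty) (hDs : MapsTo D s s) (hc : ContDiffOn ℝ 1 c s)
    (hD : ContDiffOn ℝ 1 D s) (hr : ContDiffOn ℝ 1 r s) {θ A B : ℝ} (hθ0 : 0 ≤ θ)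
    (hθ1 : θ < 1)
    (hdecay : ∀ n, ∀ x ∈ s, |(weightedComp c D)^[n] r x| ≤ B * θ ^ n)
    (hdecay' : ∀ n, ∀ x ∈ s, |deriv ((weightedComp c D)^[n] r) x| ≤ A * θ ^ n) :
    ContDiffOn ℝ 1 (fun x => ∑' n, (weightedComp c D)^[n] r x) s := by
  have hu n : ContDiffOn ℝ 1 ((weightedComp c D)^[n] r) s := hc.weightedComp_iterate hD hDs hr n
  have hgeom {C : ℝ} : Summable fun n : ℕ => C * θ ^ n :=
    (summable_geometric_of_lt_one hθ0 hθ1).mul_left C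
  obtain ⟨x₀, hx₀⟩ := hs0
  have hderiv : ∀ x ∈ s, HasDerivAt (fun y => ∑' n, (weightedComp c D)^[n] r y)
      (∑' n, deriv ((weightedComp c D)^[n] r) x) x := fun x hx =>
    hasDerivAt_tsum_of_isPreconnected hgeom hs hs'
      (fun n y hy => (((hu n).differentiableOn one_ne_zero).differentiableAt
        (hs.mem_nhds hy)).hasDerivAt) hdecay' hx₀
      (hgeom.of_norm_bounded fun n => hdecay n x₀ hx₀) hx
  have hcont : ContinuousOn (fun x => ∑' n, deriv ((weightedComp c D)^[n] r) x) s :=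
    (tendstoUniformlyOn_tsum hgeom hdecay').continuousOn <| Frequently.of_forall fun _ =>
      continuousOn_finsetSum _ fun n _ => (hu n).continuousOn_deriv_of_isOpen hs le_rfl
  rw [show (1 : WithTop ℕ∞) = 0 + 1 from rfl, contDiffOn_succ_iff_deriv_of_isOpen hs]
  exact ⟨fun x hx => (hderiv x hx).differentiableAt.differentiableWithinAt, by simp,
    contDiffOn_zero.2 (hcont.congr fun x hx => (hderiv x hx).deriv)⟩

lemma tsum_weightedComp_iterate_eq {x : ℝ}
    (hsum : Summable fun n => (weightedComp c D)^[n] r (D x)) :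
    ∑' n, (weightedComp c D)^[n] r x = r x + c x * ∑' n, (weightedComp c D)^[n] r (D x) := by
  have hshift : (fun n => (weightedComp c D)^[n + 1] r x) =
      fun n => c x * (weightedComp c D)^[n] r (D x) :=
    funext fun n => weightedComp_iterate_succ_apply n x
  rw [((summable_nat_add_iff 1).1 (hshift ▸ hsum.mul_left (c x))).tsum_eq_zero_add, hshift,
    tsum_mul_left]
  rfl

lemma abs_iterate_le_pow_mul {ν : ℝ} (hν : 0 ≤ ν) (hDs : MapsTo D s s)
    (hDν : ∀ x ∈ s, |D x| ≤ ν * |x|) (n : ℕ) {x : ℝ} (hx : x ∈ s) :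
    |D^[n] x| ≤ ν ^ n * |x| := by
  induction n with
  | zero => simp
  | succ n ih =>
    rw [Function.iterate_succ_apply', pow_succ', mul_assoc]
    exact (hDν _ (hDs.iterate n hx)).trans (mul_le_mul_of_nonneg_left ih hν)

lemma tendsto_iterate_of_abs_le {ν : ℝ} (hν0 : 0 ≤ ν) (hν1 : ν < 1) (hDs : MapsTo D s s)
    (hDν : ∀ x ∈ s, |D x| ≤ ν * |x|) {x : ℝ} (hx : x ∈ s) :
    Tendsto (fun n => D^[n] x) atTop (𝓝 0) := by
  refine squeeze_zero_norm (fun n => abs_iterate_le_pow_mul hν0 hDs hDν n hx) ?_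
  simpa using (tendsto_pow_atTop_nhds_zero_of_lt_one hν0 hν1).mul_const |x|

lemma eqOn_zero_of_eq_weightedComp {e : ℝ → ℝ} (hc : ∀ x ∈ s, |c x| ≤ 1)
    (hDs : MapsTo D s s) (horbit : ∀ x ∈ s, Tendsto (fun n => D^[n] x) atTop (𝓝 0))
    (he : ContinuousWithinAt e s 0) (he0 : e 0 = 0)
    (heq : ∀ x ∈ s, e x = weightedComp c D e x) :
    ∀ x ∈ s, e x = 0 := by
  have hle : ∀ n, ∀ x ∈ s, |e x| ≤ |e (D^[n] x)| := by
    intro n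
    induction n with
    | zero => simp
    | succ n ih =>
      intro x hx
      rw [Function.iterate_succ_apply]
      calc |e x| = |c x| * |e (D x)| := by rw [heq x hx, weightedComp_apply, abs_mul]
        _ ≤ |e (D x)| := mul_le_of_le_one_left (abs_nonneg _) (hc x hx)
        _ ≤ _ := ih _ (hDs hx)
  intro x hx
  have hlim : Tendsto (fun n => e (D^[n] x)) atTop (𝓝 0) := he0 ▸ he.tendsto.comp
    (tendsto_nhdsWithin_iff.2 ⟨horbit x hx, Eventually.of_forall fun n => hDs.iterate n hx⟩)
  simpa using ge_of_tendsto' hlim.abs fun n => hle n x hx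

theorem contDiffOn_one_of_eq_weightedComp_add {w : ℝ → ℝ} (hs : IsOpen s)
    (hs' : IsPreconnected s) (h0 : (0 : ℝ) ∈ s) (hDs : MapsTo D s s)
    (hc : ContDiffOn ℝ 1 c s) (hD : ContDiffOn ℝ 1 D s) (hr : ContDiffOn ℝ 1 r s)
    {ν θ K R B : ℝ} (hνθ : ν < θ) (hθ1 : θ < 1) (hDν : ∀ x ∈ s, |D x| ≤ ν * |x|)
    (hc1 : ∀ x ∈ s, |c x| ≤ 1) (hc' : ∀ x ∈ s, |deriv c x| ≤ K)
    (hD' : ∀ x ∈ s, |deriv D x| ≤ ν) (hr' : ∀ x ∈ s, |deriv r x| ≤ R)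
    (hdecay : ∀ n, ∀ x ∈ s, |(weightedComp c D)^[n] r x| ≤ B * θ ^ n)
    (hw : ContinuousOn w s) (hweq : ∀ x ∈ s, w x = weightedComp c D w x + r x)
    (hw0 : c 0 ≠ 1 ∨ w 0 = 0) :
    ContDiffOn ℝ 1 w s := by
  have hν : 0 ≤ ν := (abs_nonneg _).trans (hD' 0 h0)
  have hD0 : D 0 = 0 := abs_eq_zero.1 (le_antisymm (by simpa using hDν 0 h0) (abs_nonneg _))
  obtain ⟨A, hA⟩ :=
    abs_deriv_weightedComp_iterate_le hs hDs hc hD hr hνθ hc1 hc' hD' hr' hdecay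
  set G := fun x => ∑' n, (weightedComp c D)^[n] r x
  have hG : ContDiffOn ℝ 1 G s := contDiffOn_tsum_weightedComp_iterate hs hs' ⟨0, h0⟩ hDs hc
    hD hr (hν.trans hνθ.le) hθ1 hdecay hA
  have hGeq : ∀ x ∈ s, G x = weightedComp c D G x + r x := fun x hx => by
    rw [weightedComp_apply, add_comm]
    exact tsum_weightedComp_iterate_eq <|
      (summable_geometric_of_lt_one (hν.trans hνθ.le) hθ1).mul_left B |>.of_norm_bounded
        fun n => hdecay n _ (hDs hx)
  set e := fun x => w x - G x
  have heq : ∀ x ∈ s, e x = weightedComp c D e x := fun x hx => by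
    simp only [e, weightedComp_apply, hweq x hx, hGeq x hx]
    ring
  have he0 : e 0 = 0 := by
    -- If `c 0 = 1`, the equation at `0` forces `r 0 = 0`, so the series vanishes at `0`.
    by_cases hc0 : c 0 = 1
    · have hr0 : r 0 = 0 := by simpa [hD0, hc0] using hweq 0 h0
      have hterm : ∀ n, (weightedComp c D)^[n] r 0 = 0 := by
        intro n
        induction n with
        | zero => exact hr0
        | succ n ih => rw [weightedComp_iterate_succ_apply, hD0, ih, mul_zero]
      simp [e, G, hterm, hw0.resolve_left (not_not.2 hc0)]
    · have := heq 0 h0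
      rw [weightedComp_apply, hD0] at this
      exact eq_zero_of_mul_eq_self_left hc0 this.symm
  have hwG := eqOn_zero_of_eq_weightedComp hc1 hDs
    (fun x hx => tendsto_iterate_of_abs_le hν (hνθ.trans hθ1) hDs hDν hx)
    ((hw.sub hG.continuousOn) 0 h0) he0 heq
  exact hG.congr fun x hx => sub_eq_zero.1 (hwG x hx)

end WeightedComp

lemma abs_le_mul_abs_of_abs_deriv_le {f : ℝ → ℝ} {s : Set ℝ} {C : ℝ} (hs : Convex ℝ s)
    (h0 : (0 : ℝ) ∈ s) (hf0 : f 0 = 0) (hf : ∀ x ∈ s, DifferentiableAt ℝ f x)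
    (hf' : ∀ x ∈ s, |deriv f x| ≤ C) {x : ℝ} (hx : x ∈ s) : |f x| ≤ C * |x| := by
  simpa [hf0] using hs.norm_image_sub_le_of_norm_deriv_le hf hf' h0 hx

lemma mapsTo_Ioo_of_abs_le_mul_abs {D : ℝ → ℝ} {ρ ν : ℝ} (hν : ν ≤ 1)
    (hDν : ∀ x ∈ Ioo (-ρ) ρ, |D x| ≤ ν * |x|) :
    MapsTo D (Ioo (-ρ) ρ) (Ioo (-ρ) ρ) := by
  intro x hx
  have hxρ : |x| < ρ := abs_lt.2 hx
  exact abs_lt.1 <| (hDν x hx).trans_lt <| by nlinarith [abs_nonneg x]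

lemma exists_abs_le_of_continuousOn_Ioo {f : ℝ → ℝ} {ρ δ : ℝ} (hρδ : ρ < δ)
    (hf : ContinuousOn f (Ioo (-δ) δ)) : ∃ C, ∀ x ∈ Ioo (-ρ) ρ, |f x| ≤ C := by
  obtain ⟨C, hC⟩ :=
    isCompact_Icc.exists_bound_of_continuousOn (hf.mono (Icc_subset_Ioo (neg_lt_neg hρδ) hρδ))
  exact ⟨C, fun x hx => hC x (Ioo_subset_Icc_self hx)⟩

lemma contDiffOn_Ioo_of_forall_lt {f : ℝ → ℝ} {δ : ℝ} {n : WithTop ℕ∞}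
    (hf : ∀ ρ, 0 < ρ → ρ < δ → ContDiffOn ℝ n f (Ioo (-ρ) ρ)) :
    ContDiffOn ℝ n f (Ioo (-δ) δ) := by
  intro x hx
  obtain ⟨ρ, hxρ, hρδ⟩ := exists_between (abs_lt.2 hx)
  exact ((hf ρ ((abs_nonneg x).trans_lt hxρ) hρδ).contDiffAt
    (isOpen_Ioo.mem_nhds (abs_lt.1 hxρ))).contDiffWithinAt

lemma exists_abs_weightedComp_derivPow_iterate_le {D r : ℝ → ℝ} {ρ δ ν : ℝ} {j : ℕ}
    (hρδ : ρ < δ) (hρ : 0 < ρ) (hν : 0 ≤ ν) (hν1 : ν ≤ 1)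
    (hDs : MapsTo D (Ioo (-ρ) ρ) (Ioo (-ρ) ρ))
    (hDν : ∀ x ∈ Ioo (-ρ) ρ, |D x| ≤ ν * |x|)
    (hD' : ∀ x ∈ Ioo (-ρ) ρ, |deriv D x| ≤ ν) (hr : ContDiffOn ℝ 1 r (Ioo (-δ) δ))
    (hr0 : 0 < j ∨ r 0 = 0) :
    ∃ B, ∀ n, ∀ x ∈ Ioo (-ρ) ρ,
      |(weightedComp (deriv D ^ j) D)^[n] r x| ≤ B * ν ^ n := by
  have hsub : Ioo (-ρ) ρ ⊆ Ioo (-δ) δ := Ioo_subset_Ioo (by linarith) hρδ.le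
  have hc : ∀ x ∈ Ioo (-ρ) ρ, |(deriv D ^ j) x| ≤ ν ^ j := fun x hx => by
    rw [Pi.pow_apply, abs_pow]
    exact pow_le_pow_left₀ (abs_nonneg _) (hD' x hx) j
  rcases hr0 with hj | hr0
  · obtain ⟨B, hB⟩ := exists_abs_le_of_continuousOn_Ioo hρδ hr.continuousOn
    refine ⟨B, fun n x hx => ?_⟩
    calc _ ≤ (ν ^ j) ^ n * |r (D^[n] x)| :=
          abs_weightedComp_iterate_le (pow_nonneg hν j) hc hDs n x hx
      _ ≤ ν ^ n * B := mul_le_mul (pow_le_pow_left₀ (pow_nonneg hν j)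
          (pow_le_of_le_one hν hν1 hj.ne') n) (hB _ (hDs.iterate n hx)) (abs_nonneg _)
          (pow_nonneg hν n)
      _ = B * ν ^ n := mul_comm _ _
  · obtain ⟨R, hR⟩ := exists_abs_le_of_continuousOn_Ioo hρδ
      (hr.continuousOn_deriv_of_isOpen isOpen_Ioo le_rfl)
    have h0 : (0 : ℝ) ∈ Ioo (-ρ) ρ := ⟨neg_lt_zero.2 hρ, hρ⟩
    have hR0 : 0 ≤ R := (abs_nonneg _).trans (hR 0 h0)
    have hrR : ∀ y ∈ Ioo (-ρ) ρ, |r y| ≤ R * |y| := fun y hy =>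
      abs_le_mul_abs_of_abs_deriv_le (convex_Ioo _ _) h0 hr0 (fun z hz =>
        (hr.differentiableOn one_ne_zero).differentiableAt (isOpen_Ioo.mem_nhds (hsub hz))) hR hy
    refine ⟨R * ρ, fun n x hx => ?_⟩
    calc _ ≤ (ν ^ j) ^ n * |r (D^[n] x)| :=
          abs_weightedComp_iterate_le (pow_nonneg hν j) hc hDs n x hx
      _ ≤ 1 * (R * (ν ^ n * ρ)) := by
          gcongr
          · exact pow_le_one₀ (pow_nonneg hν j) (pow_le_one₀ hν hν1)
          · exact (hrR _ (hDs.iterate n hx)).trans (mul_le_mul_of_nonneg_left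
              ((abs_iterate_le_pow_mul hν hDs hDν n hx).trans
                (mul_le_mul_of_nonneg_left (abs_lt.2 hx).le (pow_nonneg hν n))) hR0)
      _ = R * ρ * ν ^ n := by ring

theorem contDiffOn_one_of_eq_derivPow_weightedComp_add {D r w : ℝ → ℝ} {δ ν : ℝ} {j : ℕ}
    (hν1 : ν < 1) (hD : ContDiffOn ℝ 2 D (Ioo (-δ) δ))
    (hDν : ∀ x ∈ Ioo (-δ) δ, |D x| ≤ ν * |x|)
    (hD' : ∀ x ∈ Ioo (-δ) δ, |deriv D x| ≤ ν)
    (hr : ContDiffOn ℝ 1 r (Ioo (-δ) δ)) (hw : ContinuousOn w (Ioo (-δ) δ))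
    (hweq : ∀ x ∈ Ioo (-δ) δ, w x = weightedComp (deriv D ^ j) D w x + r x)
    (hw0 : 0 < j ∨ w 0 = 0) :
    ContDiffOn ℝ 1 w (Ioo (-δ) δ) := by
  refine contDiffOn_Ioo_of_forall_lt fun ρ hρ hρδ => ?_
  have h0 : (0 : ℝ) ∈ Ioo (-ρ) ρ := ⟨neg_lt_zero.2 hρ, hρ⟩
  have hsub : Ioo (-ρ) ρ ⊆ Ioo (-δ) δ := Ioo_subset_Ioo (by linarith) hρδ.le
  have hDν' : ∀ y ∈ Ioo (-ρ) ρ, |D y| ≤ ν * |y| := fun y hy => hDν y (hsub hy)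
  have hD'' : ∀ y ∈ Ioo (-ρ) ρ, |deriv D y| ≤ ν := fun y hy => hD' y (hsub hy)
  have hν : 0 ≤ ν := (abs_nonneg _).trans (hD'' 0 h0)
  have hD0 : D 0 = 0 := abs_eq_zero.1 (le_antisymm (by simpa using hDν' 0 h0) (abs_nonneg _))
  have hDs := mapsTo_Ioo_of_abs_le_mul_abs hν1.le hDν'
  have hc : ContDiffOn ℝ 1 (deriv D ^ j) (Ioo (-δ) δ) :=
    (hD.deriv_of_isOpen isOpen_Ioo (by norm_num)).pow j
  have hc1 : ∀ y ∈ Ioo (-ρ) ρ, |(deriv D ^ j) y| ≤ 1 := fun y hy => by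
    rw [Pi.pow_apply, abs_pow]
    exact pow_le_one₀ (abs_nonneg _) ((hD'' y hy).trans hν1.le)
  have hc0 : 0 < j → (deriv D ^ j) 0 ≠ 1 := fun hj => by
    refine ne_of_lt ((le_abs_self _).trans_lt ?_)
    rw [Pi.pow_apply, abs_pow]
    exact pow_lt_one₀ (abs_nonneg _) ((hD'' 0 h0).trans_lt hν1) hj.ne'
  have hr0 : 0 < j ∨ r 0 = 0 := by
    refine (Nat.eq_zero_or_pos j).symm.imp_right fun hj => ?_
    simpa [hj, hD0] using hweq 0 (hsub h0)
  obtain ⟨K, hK⟩ := exists_abs_le_of_continuousOn_Ioo hρδ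
    (hc.continuousOn_deriv_of_isOpen isOpen_Ioo le_rfl)
  obtain ⟨R, hR⟩ := exists_abs_le_of_continuousOn_Ioo hρδ
    (hr.continuousOn_deriv_of_isOpen isOpen_Ioo le_rfl)
  obtain ⟨B, hB⟩ :=
    exists_abs_weightedComp_derivPow_iterate_le hρδ hρ hν hν1.le hDs hDν' hD'' hr hr0
  have hB0 : 0 ≤ B := (abs_nonneg _).trans (by simpa using hB 0 0 h0)
  have hdecay : ∀ n, ∀ y ∈ Ioo (-ρ) ρ,
      |(weightedComp (deriv D ^ j) D)^[n] r y| ≤ B * ((1 + ν) / 2) ^ n := fun n y hy =>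
    (hB n y hy).trans (mul_le_mul_of_nonneg_left (pow_le_pow_left₀ hν (by linarith) n) hB0)
  exact contDiffOn_one_of_eq_weightedComp_add isOpen_Ioo isPreconnected_Ioo h0 hDs
    (hc.mono hsub) ((hD.of_le (by norm_num)).mono hsub) (hr.mono hsub) (by linarith)
    (by linarith) hDν' hc1 hK hD'' hR hdecay (hw.mono hsub) (fun y hy => hweq y (hsub hy))
    (hw0.imp_left hc0)

theorem contDiffOn_of_eq_derivPow_weightedComp_add {D : ℝ → ℝ} {δ ν : ℝ} (hν1 : ν < 1)
    (hDν : ∀ x ∈ Ioo (-δ) δ, |D x| ≤ ν * |x|)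
    (hD' : ∀ x ∈ Ioo (-δ) δ, |deriv D x| ≤ ν)
    (n : ℕ) {j : ℕ} {w r : ℝ → ℝ} (hD : ContDiffOn ℝ (n + 1 : ℕ) D (Ioo (-δ) δ))
    (hr : ContDiffOn ℝ n r (Ioo (-δ) δ)) (hw : ContinuousOn w (Ioo (-δ) δ))
    (hweq : ∀ x ∈ Ioo (-δ) δ, w x = weightedComp (deriv D ^ j) D w x + r x)
    (hw0 : 0 < j ∨ w 0 = 0) :
    ContDiffOn ℝ n w (Ioo (-δ) δ) := by
  induction n generalizing j w r with
  | zero => exact contDiffOn_zero.2 hw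
  | succ n ih =>
    have hV : IsOpen (Ioo (-δ) δ) := isOpen_Ioo
    have hDs := mapsTo_Ioo_of_abs_le_mul_abs hν1.le hDν
    have hw1 : ContDiffOn ℝ 1 w (Ioo (-δ) δ) :=
      contDiffOn_one_of_eq_derivPow_weightedComp_add hν1 (hD.of_le (by norm_cast; omega)) hDν
        hD' (hr.of_le (by norm_cast; omega)) hw hweq hw0
    have hwn : ContDiffOn ℝ n w (Ioo (-δ) δ) :=
      ih (hD.of_le (by norm_cast; omega)) (hr.of_le (by norm_cast; omega)) hw hweq hw0
    have hc : ContDiffOn ℝ (n + 1 : ℕ) (deriv D ^ j) (Ioo (-δ) δ) :=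
      (hD.deriv_of_isOpen hV (by push_cast; rfl)).pow j
    -- `w'` solves the equation with `j + 1`; its new inhomogeneity is `C^n` because `w` is.
    have hw' : ∀ x ∈ Ioo (-δ) δ, deriv w x = weightedComp (deriv D ^ (j + 1)) D (deriv w) x +
        (deriv (deriv D ^ j) x * w (D x) + deriv r x) := fun x hx => by
      rw [pow_succ]
      exact deriv_eq_weightedComp_add hV hDs (hc.differentiableOn (by simp))
        (hD.differentiableOn (by simp)) (hr.differentiableOn (by simp))
        (hw1.differentiableOn one_ne_zero) hweq hx
    have hr' : ContDiffOn ℝ n (fun x => deriv (deriv D ^ j) x * w (D x) + deriv r x)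
        (Ioo (-δ) δ) :=
      ((hc.deriv_of_isOpen hV (by push_cast; rfl)).mul
        (hwn.comp (hD.of_le (by norm_cast; omega)) hDs)).add
        (hr.deriv_of_isOpen hV (by push_cast; rfl))
    have hw'n := ih (hD.of_le (by norm_cast; omega)) hr'
      (hw1.continuousOn_deriv_of_isOpen hV le_rfl) hw' (Or.inl j.succ_pos)
    rw [Nat.cast_succ, contDiffOn_succ_iff_deriv_of_isOpen hV]
    exact ⟨hw1.differentiableOn one_ne_zero, by simp, hw'n⟩

lemma deriv_comp_mul_deriv_eq_of_schroder {D h : ℝ → ℝ} {lam : ℝ} {U : Set ℝ}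
    (hU : IsOpen U) (hDU : MapsTo D U U) (hD : DifferentiableOn ℝ D U)
    (hh : DifferentiableOn ℝ h U)
    (hSch : ∀ x ∈ U, h (D x) = lam * h x) {x : ℝ} (hx : x ∈ U) :
    deriv h (D x) * deriv D x = lam * deriv h x := by
  have hcomp : HasDerivAt (fun y => h (D y)) (deriv h (D x) * deriv D x) x :=
    (hh.differentiableAt (hU.mem_nhds (hDU hx))).hasDerivAt.comp x
      (hD.differentiableAt (hU.mem_nhds hx)).hasDerivAt
  have hmul : HasDerivAt (fun y => lam * h y) (lam * deriv h x) x :=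
    (hh.differentiableAt (hU.mem_nhds hx)).hasDerivAt.const_mul lam
  exact hcomp.unique (hmul.congr_of_eventuallyEq (eventually_of_mem (hU.mem_nhds hx) hSch))

theorem contDiffOn_conj_Ioo_of_schroder {D h : ℝ → ℝ} {lam δ ν : ℝ} (m : ℕ)
    (hlam : 0 < lam) (hν1 : ν < 1) (hD : ContDiffOn ℝ (m + 1 : ℕ) D (Ioo (-δ) δ))
    (hDν : ∀ x ∈ Ioo (-δ) δ, |D x| ≤ ν * |x|)
    (hD' : ∀ x ∈ Ioo (-δ) δ, deriv D x ∈ Ioc 0 ν)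
    (hh : ContDiffOn ℝ 1 h (Ioo (-δ) δ)) (hh' : ∀ x ∈ Ioo (-δ) δ, 0 < deriv h x)
    (hh'0 : deriv h 0 = 1) (hSch : ∀ x ∈ Ioo (-δ) δ, h (D x) = lam * h x) :
    ContDiffOn ℝ (m + 1 : ℕ) h (Ioo (-δ) δ) := by
  have hV : IsOpen (Ioo (-δ) δ) := isOpen_Ioo
  have hDs := mapsTo_Ioo_of_abs_le_mul_abs hν1.le hDν
  set ψ := fun x => Real.log (deriv h x)
  have hψeq : ∀ x ∈ Ioo (-δ) δ,
      ψ x = weightedComp (deriv D ^ 0) D ψ x + Real.log (deriv D x / lam) := fun x hx => by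
    have hchain := deriv_comp_mul_deriv_eq_of_schroder hV hDs (hD.differentiableOn (by simp))
      (hh.differentiableOn one_ne_zero) hSch hx
    rw [weightedComp_apply, pow_zero, Pi.one_apply, one_mul, ← Real.log_mul (hh' _ (hDs hx)).ne'
      (div_pos (hD' x hx).1 hlam).ne', ← mul_div_assoc, hchain, mul_div_cancel_left₀ _ hlam.ne']
  have hφ : ContDiffOn ℝ m (fun x => Real.log (deriv D x / lam)) (Ioo (-δ) δ) :=
    ((hD.deriv_of_isOpen hV (by push_cast; rfl)).div_const lam).log fun x hx =>
      (div_pos (hD' x hx).1 hlam).ne'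
  have hψ : ContDiffOn ℝ m ψ (Ioo (-δ) δ) :=
    contDiffOn_of_eq_derivPow_weightedComp_add hν1 hDν
      (fun x hx => (abs_of_pos (hD' x hx).1).trans_le (hD' x hx).2) m hD hφ
      ((hh.continuousOn_deriv_of_isOpen hV le_rfl).log fun x hx => (hh' x hx).ne') hψeq
      (Or.inr (by simp [ψ, hh'0]))
  rw [Nat.cast_succ, contDiffOn_succ_iff_deriv_of_isOpen hV]
  exact ⟨hh.differentiableOn one_ne_zero, by simp,
    hψ.exp.congr fun x hx => (Real.exp_log (hh' x hx)).symm⟩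

lemma exists_iterate_mem_Ioo {D : ℝ → ℝ} {a δ : ℝ} (hδ : 0 < δ)
    (hD : ContinuousOn D (Ioo (-a) a)) (hcontract : ∀ x ∈ Ioo (-a) a, x ≠ 0 → |D x| < |x|)
    {x : ℝ} (hx : x ∈ Ioo (-a) a) : ∃ N, D^[N] x ∈ Ioo (-δ) δ := by
  -- Otherwise the orbit stays in a compact annulus on which `|y| - |D y|` has a positive minimum.
  by_contra! hout
  set K := Icc (-|x|) |x| \ Ioo (-δ) δ
  have hKU : K ⊆ Ioo (-a) a := fun y hy => abs_lt.1 ((abs_le.2 hy.1).trans_lt (abs_lt.2 hx))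
  have hK0 : ∀ y ∈ K, y ≠ 0 := fun y hy h0 => hy.2 (h0 ▸ ⟨neg_lt_zero.2 hδ, hδ⟩)
  have horbit : ∀ n, D^[n] x ∈ K := by
    intro n
    induction n with
    | zero => exact ⟨abs_le.1 le_rfl, hout 0⟩
    | succ n ih =>
      refine ⟨?_, hout (n + 1)⟩
      rw [Function.iterate_succ_apply']
      exact abs_le.1 ((hcontract _ (hKU ih) (hK0 _ ih)).le.trans (abs_le.2 ih.1))
  obtain ⟨y, hy, hmin⟩ := (isCompact_Icc.diff isOpen_Ioo).exists_isMinOn ⟨x, horbit 0⟩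
    (continuous_abs.continuousOn.sub (continuous_abs.comp_continuousOn (hD.mono hKU)))
  have hη : 0 < |y| - |D y| := sub_pos.2 (hcontract y (hKU hy) (hK0 y hy))
  have hdecr : ∀ n : ℕ, |D^[n] x| ≤ |x| - n * (|y| - |D y|) := by
    intro n
    induction n with
    | zero => simp
    | succ n ih =>
      have hstep : |y| - |D y| ≤ |D^[n] x| - |D (D^[n] x)| := hmin (horbit n)
      rw [Function.iterate_succ_apply']
      push_cast
      linarith
  obtain ⟨n, hn⟩ := exists_nat_gt (|x| / (|y| - |D y|))
  linarith [hdecr n, (div_lt_iff₀ hη).1 hn, abs_nonneg (D^[n] x)]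

lemma contDiffOn_conj_of_iterate_mem {D h : ℝ → ℝ} {lam : ℝ} {U V : Set ℝ}
    {n : WithTop ℕ∞} (hU : IsOpen U) (hV : IsOpen V) (hDU : MapsTo D U U)
    (hD : ContDiffOn ℝ n D U) (hlam : lam ≠ 0) (hSch : ∀ x ∈ U, h (D x) = lam * h x)
    (hhV : ContDiffOn ℝ n h V) (horbit : ∀ x ∈ U, ∃ N, D^[N] x ∈ V) :
    ContDiffOn ℝ n h U := by
  have hDN : ∀ N, ContDiffOn ℝ n D^[N] U := by
    intro N
    induction N with
    | zero => exact contDiffOn_id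
    | succ N ih => rw [Function.iterate_succ]; exact ih.comp hD hDU
  have hSchN : ∀ N, ∀ x ∈ U, h (D^[N] x) = lam ^ N * h x := by
    intro N
    induction N with
    | zero => simp
    | succ N ih =>
      intro x hx
      rw [Function.iterate_succ_apply, ih _ (hDU hx), hSch x hx, pow_succ, mul_assoc]
  intro x hx
  obtain ⟨N, hN⟩ := horbit x hx
  have hW : IsOpen (U ∩ D^[N] ⁻¹' V) := (hDN N).continuousOn.isOpen_inter_preimage hU hV
  have hhW : ContDiffOn ℝ n h (U ∩ D^[N] ⁻¹' V) :=
    (contDiffOn_const.mul (hhV.comp ((hDN N).mono inter_subset_left) fun y hy => hy.2)).congr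
      fun y hy => by
        rw [Function.comp_apply, hSchN N y hy.1, inv_mul_cancel_left₀ (pow_ne_zero N hlam)]
  exact (hhW.contDiffAt (hW.mem_nhds ⟨hx, hN⟩)).contDiffWithinAt

theorem contDiffOn_map_of_schroder {D h : ℝ → ℝ} {lam : ℝ} {U : Set ℝ}
    {n : WithTop ℕ∞} (hU : IsOpen U) (hn : n ≠ 0) (hD : ContinuousOn D U) (hDU : MapsTo D U U)
    (hh : ContDiffOn ℝ n h U) (hh' : ∀ x ∈ U, deriv h x ≠ 0)
    (hSch : ∀ x ∈ U, h (D x) = lam * h x) :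
    ContDiffOn ℝ n D U := by
  intro x hx
  have hC : ContDiffAt ℝ n h (D x) := hh.contDiffAt (hU.mem_nhds (hDU hx))
  have hfd := ((hh.differentiableOn hn).differentiableAt
    (hU.mem_nhds (hDU hx))).hasDerivAt.hasFDerivAt_equiv (hh' _ (hDU hx))
  have hleft : ∀ᶠ z in 𝓝 (D x), hC.localInverse hfd hn (h z) = z :=
    (hC.hasStrictFDerivAt' hfd hn).eventually_left_inverse
  have hev : D =ᶠ[𝓝 x] fun y => hC.localInverse hfd hn (lam * h y) := by
    filter_upwards [(hD.continuousAt (hU.mem_nhds hx)).eventually hleft, hU.mem_nhds hx]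
      with y hinv hy
    rw [← hSch y hy, hinv]
  have hinv : ContDiffAt ℝ n (hC.localInverse hfd hn) (lam * h x) :=
    hSch x hx ▸ hC.to_localInverse hfd hn
  exact ((hinv.comp x (contDiffAt_const.mul (hh.contDiffAt (hU.mem_nhds hx)))).congr_of_eventuallyEq
    hev).contDiffWithinAt

lemma mapsTo_Ioo_of_abs_lt {D : ℝ → ℝ} {a : ℝ} (hD0 : D 0 = 0)
    (hcontract : ∀ x ∈ Ioo (-a) a, x ≠ 0 → |D x| < |x|) :
    MapsTo D (Ioo (-a) a) (Ioo (-a) a) := by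
  intro x hx
  rcases eq_or_ne x 0 with rfl | hx0
  · rwa [hD0]
  · exact abs_lt.1 ((hcontract x hx hx0).trans (abs_lt.2 hx))

theorem contDiffOn_conj_of_schroder {D h : ℝ → ℝ} {a lam : ℝ} (m : ℕ) (ha : 0 < a)
    (hD : ContDiffOn ℝ (m + 1 : ℕ) D (Ioo (-a) a)) (hD0 : D 0 = 0) (hlam : deriv D 0 = lam)
    (hlam0 : 0 < lam) (hlam1 : lam < 1) (hcontract : ∀ x ∈ Ioo (-a) a, x ≠ 0 → |D x| < |x|)
    (hh : ContDiffOn ℝ 1 h (Ioo (-a) a)) (hh'0 : deriv h 0 = 1)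
    (hh' : ∀ x ∈ Ioo (-a) a, 0 < deriv h x) (hSch : ∀ x ∈ Ioo (-a) a, h (D x) = lam * h x) :
    ContDiffOn ℝ (m + 1 : ℕ) h (Ioo (-a) a) := by
  have h0 : (0 : ℝ) ∈ Ioo (-a) a := ⟨neg_lt_zero.2 ha, ha⟩
  have hD'0 : deriv D 0 ∈ Ioo 0 ((1 + lam) / 2) := by rw [hlam]; constructor <;> linarith
  have hnhds : Ioo (-a) a ∩ deriv D ⁻¹' Ioo 0 ((1 + lam) / 2) ∈ 𝓝 0 :=
    inter_mem (isOpen_Ioo.mem_nhds h0) <|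
      ((hD.continuousOn_deriv_of_isOpen isOpen_Ioo (by simp)).continuousAt
        (isOpen_Ioo.mem_nhds h0)).preimage_mem_nhds (isOpen_Ioo.mem_nhds hD'0)
  obtain ⟨δ, hδ, hball⟩ := Metric.mem_nhds_iff.1 hnhds
  rw [Real.ball_eq_Ioo, zero_sub, zero_add] at hball
  have hsub : Ioo (-δ) δ ⊆ Ioo (-a) a := fun x hx => (hball hx).1
  have hD' : ∀ x ∈ Ioo (-δ) δ, deriv D x ∈ Ioc 0 ((1 + lam) / 2) := fun x hx =>
    Ioo_subset_Ioc_self (hball hx).2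
  have hDν : ∀ x ∈ Ioo (-δ) δ, |D x| ≤ (1 + lam) / 2 * |x| := fun x hx =>
    abs_le_mul_abs_of_abs_deriv_le (convex_Ioo _ _) ⟨neg_lt_zero.2 hδ, hδ⟩ hD0
      (fun y hy => (hD.differentiableOn (by simp)).differentiableAt (isOpen_Ioo.mem_nhds (hsub hy)))
      (fun y hy => (abs_of_pos (hD' y hy).1).trans_le (hD' y hy).2) hx
  have hloc := contDiffOn_conj_Ioo_of_schroder m hlam0 (by linarith) (hD.mono hsub) hDν hD'
    (hh.mono hsub) (fun x hx => hh' x (hsub hx)) hh'0 (fun x hx => hSch x (hsub hx))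
  exact contDiffOn_conj_of_iterate_mem isOpen_Ioo isOpen_Ioo
    (mapsTo_Ioo_of_abs_lt hD0 hcontract) hD hlam0.ne' hSch hloc
    fun x hx => exists_iterate_mem_Ioo hδ hD.continuousOn hcontract hx

theorem conjugation_regularity_general
    (a : ℝ) (ha : 0 < a) (D : ℝ → ℝ) (lam : ℝ)
    (hD : ContDiffOn ℝ 1 D (Set.Ioo (-a) a))
    (hD0 : D 0 = 0)
    (hlam : deriv D 0 = lam) (hlam0 : 0 < lam) (hlam1 : lam < 1)
    (hcontract : ∀ x ∈ Set.Ioo (-a) a, x ≠ 0 → |D x| < |x|)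
    (h : ℝ → ℝ)
    (hh : ContDiffOn ℝ 1 h (Set.Ioo (-a) a))
    (hh'0 : deriv h 0 = 1)
    (hh'pos : ∀ x ∈ Set.Ioo (-a) a, 0 < deriv h x)
    (hSch : ∀ x ∈ Set.Ioo (-a) a, h (D x) = lam * h x)
    (k : ℕ) (hk : 2 ≤ k) :
    ContDiffOn ℝ k h (Set.Ioo (-a) a) ↔ ContDiffOn ℝ k D (Set.Ioo (-a) a) := by
  constructor
  · intro hhk
    exact contDiffOn_map_of_schroder isOpen_Ioo (by exact_mod_cast (by omega : k ≠ 0))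
      hD.continuousOn (mapsTo_Ioo_of_abs_lt hD0 hcontract) hhk (fun x hx => (hh'pos x hx).ne')
      hSch
  · obtain ⟨m, rfl⟩ : ∃ m, k = m + 1 := ⟨k - 1, by omega⟩
    intro hDk
    exact contDiffOn_conj_of_schroder m ha hDk hD0 hlam hlam0 hlam1 hcontract hh hh'0
      hh'pos hSch

/-- **Proposition 3.1 (regularity).** For every integer `k ≥ 2`, the conjugation `h`
is of class `C^k` on `(-a,a)` if and only if `D` is of class `C^k` on `(-a,a)`. -/
theorem conjugation_regularity
    (a ε : ℝ) (ha : 0 < a) (hε : 0 < ε) (D : ℝ → ℝ) (lam : ℝ)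
    (hD : ContDiffOn ℝ 1 D (Set.Ioo (-a) a))
    (hHolder : ∃ k > 0, ∀ y ∈ Set.Ioo (-a) a, ∀ z ∈ Set.Ioo (-a) a,
      |deriv D z - deriv D y| ≤ k * |z - y| ^ ε)
    (hD0 : D 0 = 0)
    (hlam : deriv D 0 = lam) (hlam0 : 0 < lam) (hlam1 : lam < 1)
    (hcontract : ∀ x ∈ Set.Ioo (-a) a, x ≠ 0 → |D x| < |x|)
    (h : ℝ → ℝ)
    (hh : ContDiffOn ℝ 1 h (Set.Ioo (-a) a))
    (hh0 : h 0 = 0) (hh'0 : deriv h 0 = 1)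
    (hh'pos : ∀ x ∈ Set.Ioo (-a) a, 0 < deriv h x)
    (hSch : ∀ x ∈ Set.Ioo (-a) a, h (D x) = lam * h x)
    (k : ℕ) (hk : 2 ≤ k) :
    ContDiffOn ℝ k h (Set.Ioo (-a) a) ↔ ContDiffOn ℝ k D (Set.Ioo (-a) a) :=
  conjugation_regularity_general a ha D lam hD hD0 hlam hlam0 hlam1 hcontract h hh hh'0 hh'pos hSch
    k hk
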